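/- Let T be a tree, u a vertex with deg(u) = Δ(T) = k, and let e = uu_i be an edge at u. Let T_{i2} be the component of T \ e containing u_i. Then α(T_{i2}) ≤ α(T) − Δ(T) + 1. -/

import Mathlib

open SimpleGraph

/-- An edge coloring `c` makes `G` conflict-free connected: every two distinct
vertices are joined by a path containing a color used on exactly one of its edges. -/
def IsCFConnColoring {V : Type*} (G : SimpleGraph V) (c : Sym2 V → ℕ) : Prop :=
  ∀ u v : V, u ≠ v → ∃ p : G.Walk u v, p.IsPath ∧
    ∃ col : ℕ, (p.edges.filter (fun e => c e = col)).length = 1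

/-- The conflict-free connection number: the minimum number of colors in a
conflict-free connection coloring. -/
noncomputable def cfcNum {V : Type*} (G : SimpleGraph V) : ℕ :=
  sInf {k | ∃ c : Sym2 V → ℕ, (∀ e, c e < k) ∧ IsCFConnColoring G c}

/-- The independence number: the maximum size of a set of pairwise non-adjacent vertices. -/
noncomputable def indepNum {V : Type*} [Fintype V] (G : SimpleGraph V) : ℕ :=
  sSup {n | ∃ s : Finset V, (↑s : Set V).Pairwise (fun a b => ¬ G.Adj a b) ∧ s.card = n}

noncomputable local instance {V : Type*} (G : SimpleGraph V) : DecidableRel G.Adj :=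
  fun _ _ => Classical.dec _

/-- The independence number of the subgraph of `G` induced on the set `A`. -/
noncomputable def indepNumOn {V : Type*} (G : SimpleGraph V) (A : Set V) : ℕ :=
  sSup {n | ∃ s : Finset V, ↑s ⊆ A ∧ (↑s : Set V).Pairwise (fun a b => ¬ G.Adj a b) ∧ s.card = n}

/-!
Let `C` be the component of `uᵢ` after deleting the bridge `uuᵢ`, and `s` a maximum independent
set of `C`. The other `Δ - 1` neighbours of `u` lie outside `C` and have no neighbour in `C`,
since such a neighbour would reconnect `u` to `uᵢ`; in a tree they are also pairwise
non-adjacent. Hence `s` together with them is independent in `T`, of size `α(C) + Δ - 1`.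
-/

section IndependenceNumber

variable {V : Type*} (G : SimpleGraph V)

theorem card_le_indepNum [Fintype V] {s : Finset V} (hs : G.IsIndepSet s) :
    s.card ≤ _root_.indepNum G := by
  refine le_csSup ⟨Fintype.card V, ?_⟩ ⟨s, hs, rfl⟩
  rintro _ ⟨t, -, rfl⟩
  exact t.card_le_univ

theorem exists_isIndepSet_subset_card_eq_indepNumOn [Finite V] (A : Set V) :
    ∃ s : Finset V, ↑s ⊆ A ∧ G.IsIndepSet s ∧ s.card = indepNumOn G A := by
  have := Fintype.ofFinite V
  refine Nat.sSup_mem (s := {n | ∃ s : Finset V, ↑s ⊆ A ∧ G.IsIndepSet s ∧ s.card = n})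
    ⟨0, ∅, by simp⟩ ⟨Fintype.card V, ?_⟩
  rintro _ ⟨t, -, -, rfl⟩
  exact t.card_le_univ

end IndependenceNumber

namespace SimpleGraph

variable {V : Type*} {G : SimpleGraph V} {u v w : V}

theorem IsIndepSet.union {s t : Set V} (hs : G.IsIndepSet s) (ht : G.IsIndepSet t)
    (hst : ∀ a ∈ s, ∀ b ∈ t, ¬ G.Adj a b) : G.IsIndepSet (s ∪ t) :=
  Set.pairwise_union.mpr
    ⟨hs, ht, fun a ha b hb _ => ⟨hst a ha b hb, fun h => hst a ha b hb h.symm⟩⟩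

theorem IsBridge.notMem_supp_of_adj (hb : G.IsBridge s(u, v)) (huw : G.Adj u w) (hwv : w ≠ v) :
    w ∉ ((G.deleteEdges {s(u, v)}).connectedComponentMk v).supp := by
  intro hw
  rw [ConnectedComponent.mem_supp_iff, ConnectedComponent.eq] at hw
  have huw' : (G.deleteEdges {s(u, v)}).Adj u w := by simp [huw, hwv, huw.ne']
  exact isBridge_iff.mp hb (huw'.reachable.trans hw)

theorem IsBridge.not_adj_of_mem_supp (hb : G.IsBridge s(u, v)) (huw : G.Adj u w) (hwv : w ≠ v)
    {a : V} (ha : a ∈ ((G.deleteEdges {s(u, v)}).connectedComponentMk v).supp) : ¬ G.Adj a w := by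
  intro haw
  have haw' : (G.deleteEdges {s(u, v)}).Adj a w := by
    simp only [deleteEdges_adj, haw, Set.mem_singleton_iff, Sym2.eq_iff, true_and]
    rintro (⟨-, rfl⟩ | ⟨-, rfl⟩)
    exacts [hwv rfl, huw.ne rfl]
  refine hb.notMem_supp_of_adj huw hwv ?_
  rw [ConnectedComponent.mem_supp_iff] at ha ⊢
  rw [← ha, ConnectedComponent.eq]
  exact haw'.symm.reachable

end SimpleGraph

theorem stmt13 {V : Type*} [Fintype V] (T : SimpleGraph V) (hT : T.IsTree)
    (u uᵢ : V) (hu : T.degree u = T.maxDegree) (he : T.Adj u uᵢ) :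
    indepNumOn T ((T.deleteEdges {s(u, uᵢ)}).connectedComponentMk uᵢ).supp + T.maxDegree
      ≤ _root_.indepNum T + 1 := by
  classical
  have hb : T.IsBridge s(u, uᵢ) := isAcyclic_iff_forall_adj_isBridge.mp hT.isAcyclic he
  obtain ⟨s, hsC, hs, hs_card⟩ := exists_isIndepSet_subset_card_eq_indepNumOn T
    ((T.deleteEdges {s(u, uᵢ)}).connectedComponentMk uᵢ).supp
  set N := (T.neighborFinset u).erase uᵢ
  have hN : ∀ w ∈ N, T.Adj u w ∧ w ≠ uᵢ := fun w hw => by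
    simpa [N, and_comm] using hw
  have hN_indep : T.IsIndepSet (N : Set V) :=
    (isIndepSet_neighborSet_of_triangleFree T (hT.isAcyclic.cliqueFree le_rfl) u).mono
      fun w hw => (hN w hw).1
  have hdisj : Disjoint s N := Finset.disjoint_left.mpr fun w hws hwN =>
    hb.notMem_supp_of_adj (hN w hwN).1 (hN w hwN).2 (hsC hws)
  have hunion : T.IsIndepSet ↑(s ∪ N) := by
    rw [Finset.coe_union]
    exact hs.union hN_indep fun a ha w hw =>
      hb.not_adj_of_mem_supp (hN w hw).1 (hN w hw).2 (hsC ha)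
  have hN_card : N.card + 1 = T.maxDegree := by
    rw [Finset.card_erase_add_one (by simpa using he), card_neighborFinset_eq_degree, hu]
  calc indepNumOn T _ + T.maxDegree = (s ∪ N).card + 1 := by
        rw [Finset.card_union_of_disjoint hdisj, ← hN_card, hs_card, add_assoc]
    _ ≤ _root_.indepNum T + 1 := by gcongr; exact card_le_indepNum T hunion
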